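/- arXiv:1607.01515 — 7 statements merged into one kernel-verified Lean document; each statement's English description precedes it below -/
import Mathlib

section
/- Let X be a smooth finite-dimensional real normed space and let x, y ∈ X be nonzero. Then: (i) −1 ≤ cm(x,y) ≤ 1; (ii) |cm(x,y)| = 1 if and only if x and y are linearly dependent, or the segment joining x/‖x‖ and y/‖y‖ is contained in the unit sphere, or the segment joining x/‖x‖ and −y/‖y‖ is contained in the unit sphere; (iii) cm(x,y) = 0 if and only if x is Birkhoff orthogonal to y. -/
/-!
A norming functional `f` of `x` has norm one, so `|f y| ≤ ‖y‖`. Equality means that `f` attains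
its norm at `w = ±y/‖y‖` as well as at `u = x/‖x‖`; then `f` is `1` on the segment `[u, w]`, which
is therefore on the unit sphere. Conversely, a norming functional of the midpoint of a segment
`[u, w]` of the sphere norms both ends, so by smoothness it is `f`. For Birkhoff orthogonality,
`x ⊣_B y` says that `x` has the same norm in `X ⧸ ℝ ∙ y`, and a norming functional of its class
pulls back to one of `x` vanishing at `y`.
-/

open scoped Topology

variable {X : Type*} [NormedAddCommGroup X] [NormedSpace ℝ X]

/-- `f` is the norming functional of `x`: `‖f‖ = 1` and `f x = ‖x‖`. -/
def IsNormingFunctional (x : X) (f : X →L[ℝ] ℝ) : Prop :=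
  ‖f‖ = 1 ∧ f x = ‖x‖

/-- A normed space is smooth if every nonzero vector has a unique norming functional. -/
def SmoothNormedSpace (X : Type*) [NormedAddCommGroup X] [NormedSpace ℝ X] : Prop :=
  ∀ x : X, x ≠ 0 → ∃! f : X →L[ℝ] ℝ, IsNormingFunctional x f

/-- Birkhoff orthogonality: `x ⊣_B y` iff `‖x + t • y‖ ≥ ‖x‖` for all real `t`. -/
def BirkhoffOrth (x y : X) : Prop := ∀ t : ℝ, ‖x‖ ≤ ‖x + t • y‖

namespace IsNormingFunctional

variable {x y : X} {f : X →L[ℝ] ℝ}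

theorem of_norm_le_one (hx : x ≠ 0) (hf : ‖f‖ ≤ 1) (hfx : f x = ‖x‖) :
    IsNormingFunctional x f := by
  refine ⟨le_antisymm hf ?_, hfx⟩
  have h := f.le_opNorm x
  rw [hfx, Real.norm_eq_abs, abs_norm] at h
  exact one_le_of_le_mul_right₀ (norm_pos_iff.mpr hx) h

theorem abs_apply_le (hf : IsNormingFunctional x f) (y : X) : |f y| ≤ ‖y‖ := by
  simpa [hf.1] using f.le_opNorm y

theorem apply_le (hf : IsNormingFunctional x f) (y : X) : f y ≤ ‖y‖ :=
  (le_abs_self _).trans (hf.abs_apply_le y)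

theorem smul (hf : IsNormingFunctional x f) {c : ℝ} (hc : 0 ≤ c) :
    IsNormingFunctional (c • x) f := by
  refine ⟨hf.1, ?_⟩
  rw [map_smul, hf.2, smul_eq_mul, norm_smul, Real.norm_of_nonneg hc]

theorem birkhoffOrth (hf : IsNormingFunctional x f) (hy : f y = 0) : BirkhoffOrth x y := by
  intro t
  calc ‖x‖ = f (x + t • y) := by simp [hf.2, hy]
    _ ≤ ‖x + t • y‖ := hf.apply_le _

theorem abs_apply_eq_norm_of_not_linearIndependent (hf : IsNormingFunctional x f)
    (hx : x ≠ 0) (hy : y ≠ 0) (hdep : ¬ LinearIndependent ℝ ![x, y]) : |f y| = ‖y‖ := by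
  obtain ⟨a, rfl⟩ : ∃ a : ℝ, a • y = x := by
    simpa [linearIndependent_fin2, hy] using hdep
  have ha : a ≠ 0 := by
    rintro rfl
    exact hx (zero_smul ℝ y)
  have h : |a| * |f y| = |a| * ‖y‖ := by
    simpa [abs_mul, norm_smul] using congrArg abs hf.2
  exact mul_left_cancel₀ (abs_ne_zero.mpr ha) h

end IsNormingFunctional

theorem segment_subset_sphere_of_apply_eq_one {f : X →L[ℝ] ℝ} (hf : ‖f‖ ≤ 1) {u w : X}
    (hu : ‖u‖ ≤ 1) (hw : ‖w‖ ≤ 1) (hfu : f u = 1) (hfw : f w = 1) :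
    segment ℝ u w ⊆ {v : X | ‖v‖ = 1} := by
  intro v hv
  have hle : ‖v‖ ≤ 1 := by
    simpa using
      (convex_closedBall (0 : X) 1).segment_subset (by simpa using hu) (by simpa using hw) hv
  have hfv : f v = 1 := by
    obtain ⟨s, t, -, -, hst, rfl⟩ := hv
    simp [hfu, hfw, hst]
  have hge : f v ≤ ‖v‖ := by
    simpa using (le_abs_self _).trans (f.le_of_opNorm_le hf v)
  exact le_antisymm hle (hfv ▸ hge)

theorem exists_isNormingFunctional_apply_eq_zero {x y : X} (hx : x ≠ 0) (h : BirkhoffOrth x y) :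
    ∃ f : X →L[ℝ] ℝ, IsNormingFunctional x f ∧ f y = 0 := by
  set S := ℝ ∙ y
  have hxS : ‖(Submodule.Quotient.mk x : X ⧸ S)‖ = ‖x‖ := by
    refine le_antisymm (Submodule.Quotient.norm_mk_le S x) (le_of_forall_pos_le_add fun ε hε => ?_)
    obtain ⟨m, hm, hmε⟩ := Submodule.Quotient.norm_mk_lt (Submodule.Quotient.mk x : X ⧸ S) hε
    obtain ⟨c, hc⟩ := Submodule.mem_span_singleton.mp ((Submodule.Quotient.eq S).mp hm)
    have hm' : m = x + c • y := by rw [hc]; abel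
    exact (hm' ▸ h c).trans hmε.le
  obtain ⟨g, hg, hgx⟩ := exists_dual_vector ℝ _ (by rw [hxS]; exact norm_ne_zero_iff.mpr hx)
  refine ⟨g.comp S.mkQL, .of_norm_le_one hx ?_ ?_, ?_⟩
  · refine ContinuousLinearMap.opNorm_le_bound _ zero_le_one fun v => ?_
    calc ‖g (S.mkQ v)‖ ≤ 1 * ‖S.mkQ v‖ := g.le_of_opNorm_le hg.le _
      _ ≤ 1 * ‖v‖ := by simpa using Submodule.Quotient.norm_mk_le S v
  · simpa [hxS] using hgx
  · simp [(Submodule.Quotient.mk_eq_zero S).mpr (Submodule.mem_span_singleton_self y)]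

namespace SmoothNormedSpace

variable {x y u w : X} {f : X →L[ℝ] ℝ}

theorem apply_eq_one_of_segment_subset_sphere (hsm : SmoothNormedSpace X) (hu : ‖u‖ = 1)
    (hw : ‖w‖ = 1) (hseg : segment ℝ u w ⊆ {v : X | ‖v‖ = 1}) (hf : IsNormingFunctional u f) :
    f w = 1 := by
  have hm : ‖midpoint ℝ u w‖ = 1 := hseg (midpoint_mem_segment u w)
  obtain ⟨g, hg, hgm⟩ := exists_dual_vector ℝ (midpoint ℝ u w) (by simp [hm])
  have hg_le : ∀ v : X, ‖v‖ = 1 → g v ≤ 1 := fun v hv => by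
    simpa [hv] using (le_abs_self _).trans (g.le_of_opNorm_le hg.le v)
  have hsum : g u + g w = 2 := by
    rw [hm, midpoint_eq_smul_add, map_smul, map_add] at hgm
    norm_num at hgm
    linarith
  have hgu : g u = 1 := by linarith [hg_le u hu, hg_le w hw]
  have hgw : g w = 1 := by linarith [hg_le u hu, hg_le w hw]
  have hu0 : u ≠ 0 := norm_ne_zero_iff.mp (by simp [hu])
  rwa [(hsm u hu0).unique hf ⟨hg, by rw [hgu, hu]⟩]

theorem segment_subset_sphere_iff (hsm : SmoothNormedSpace X) (hu : ‖u‖ = 1) (hw : ‖w‖ = 1)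
    (hf : IsNormingFunctional u f) : segment ℝ u w ⊆ {v : X | ‖v‖ = 1} ↔ f w = 1 :=
  ⟨fun hseg => hsm.apply_eq_one_of_segment_subset_sphere hu hw hseg hf,
    segment_subset_sphere_of_apply_eq_one hf.1.le hu.le hw.le (by rw [hf.2, hu])⟩

theorem apply_eq_zero_iff_birkhoffOrth (hsm : SmoothNormedSpace X) (hx : x ≠ 0)
    (hf : IsNormingFunctional x f) : f y = 0 ↔ BirkhoffOrth x y := by
  refine ⟨hf.birkhoffOrth, fun h => ?_⟩
  obtain ⟨g, hg, hgy⟩ := exists_isNormingFunctional_apply_eq_zero hx h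
  rwa [(hsm x hx).unique hf hg]

end SmoothNormedSpace

theorem stmt_0_general (hsm : SmoothNormedSpace X)
    (F : X → X →L[ℝ] ℝ) (hF : ∀ x : X, x ≠ 0 → IsNormingFunctional x (F x))
    (x y : X) (hx : x ≠ 0) (hy : y ≠ 0) :
    (-1 ≤ F x y / ‖y‖ ∧ F x y / ‖y‖ ≤ 1) ∧
    (|F x y / ‖y‖| = 1 ↔
      (¬ LinearIndependent ℝ ![x, y]) ∨
      segment ℝ (‖x‖⁻¹ • x) (‖y‖⁻¹ • y) ⊆ {v : X | ‖v‖ = 1} ∨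
      segment ℝ (‖x‖⁻¹ • x) (-(‖y‖⁻¹ • y)) ⊆ {v : X | ‖v‖ = 1}) ∧
    (F x y / ‖y‖ = 0 ↔ BirkhoffOrth x y) := by
  have hf := hF x hx
  have hny : 0 < ‖y‖ := norm_pos_iff.mpr hy
  have hfu : IsNormingFunctional (‖x‖⁻¹ • x) (F x) := hf.smul (by positivity)
  have hu : ‖‖x‖⁻¹ • x‖ = 1 := norm_smul_inv_norm hx
  have hw : ‖‖y‖⁻¹ • y‖ = 1 := norm_smul_inv_norm hy
  have hcos : F x y / ‖y‖ = F x (‖y‖⁻¹ • y) := by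
    rw [map_smul, smul_eq_mul, inv_mul_eq_div]
  have hsegs : |F x y / ‖y‖| = 1 ↔
      segment ℝ (‖x‖⁻¹ • x) (‖y‖⁻¹ • y) ⊆ {v : X | ‖v‖ = 1} ∨
      segment ℝ (‖x‖⁻¹ • x) (-(‖y‖⁻¹ • y)) ⊆ {v : X | ‖v‖ = 1} := by
    rw [hsm.segment_subset_sphere_iff hu hw hfu,
      hsm.segment_subset_sphere_iff hu (by rwa [norm_neg]) hfu, map_neg, neg_eq_iff_eq_neg, ← hcos,
      abs_eq zero_le_one]
  have hdep : ¬ LinearIndependent ℝ ![x, y] → |F x y / ‖y‖| = 1 := fun h => by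
    rw [abs_div, abs_norm, hf.abs_apply_eq_norm_of_not_linearIndependent hx hy h, div_self hny.ne']
  refine ⟨?_, ⟨fun h => Or.inr (hsegs.mp h), fun h => h.elim hdep hsegs.mpr⟩, ?_⟩
  · rw [← abs_le, abs_div, abs_norm, div_le_one hny]
    exact hf.abs_apply_le y
  · rw [div_eq_zero_iff, or_iff_left hny.ne']
    exact hsm.apply_eq_zero_iff_birkhoffOrth hx hf

theorem stmt_0 [FiniteDimensional ℝ X] (hsm : SmoothNormedSpace X)
    (F : X → X →L[ℝ] ℝ) (hF : ∀ x : X, x ≠ 0 → IsNormingFunctional x (F x))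
    (x y : X) (hx : x ≠ 0) (hy : y ≠ 0) :
    (-1 ≤ F x y / ‖y‖ ∧ F x y / ‖y‖ ≤ 1) ∧
    (|F x y / ‖y‖| = 1 ↔
      (¬ LinearIndependent ℝ ![x, y]) ∨
      segment ℝ (‖x‖⁻¹ • x) (‖y‖⁻¹ • y) ⊆ {v : X | ‖v‖ = 1} ∨
      segment ℝ (‖x‖⁻¹ • x) (-(‖y‖⁻¹ • y)) ⊆ {v : X | ‖v‖ = 1}) ∧
    (F x y / ‖y‖ = 0 ↔ BirkhoffOrth x y) :=
  stmt_0_general hsm F hF x y hx hy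
end

section
/- Let X be a smooth finite-dimensional real normed space with dim X ≥ 2. If the cosine function is symmetric, i.e. f_x(y)/‖y‖ = f_y(x)/‖x‖ for all nonzero x, y ∈ X, then the norm of X is Euclidean: there exists an inner product ⟨·,·⟩ on X with ⟨v,v⟩ = ‖v‖² for all v ∈ X. -/
variable {X : Type*} [NormedAddCommGroup X] [NormedSpace ℝ X]

/-!
The candidate inner product is `⟨u, v⟩ := ‖u‖ f_u(v)`. It is linear in `v` because `f_u` is,
and the symmetry of the cosine function says exactly that it is symmetric, hence linear in `u`
as well; on the diagonal it is `‖v‖ f_v(v) = ‖v‖²`.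
-/

def LinearMap.mk₂OfSymm {R M : Type*} [CommSemiring R] [AddCommMonoid M] [Module R M]
    (g : M → M →ₗ[R] R) (hg : ∀ u v, g u v = g v u) : M →ₗ[R] M →ₗ[R] R :=
  LinearMap.mk₂ R (fun u v => g u v)
    (fun u₁ u₂ v => by simp only [hg _ v, map_add])
    (fun c u v => by simp only [hg _ v, map_smul])
    (fun u v₁ v₂ => map_add (g u) v₁ v₂)
    (fun c u v => map_smul (g u) c v)

theorem norm_mul_apply_comm_of_cosine_symm {F : X → X →L[ℝ] ℝ}
    (hsymm : ∀ x y : X, x ≠ 0 → y ≠ 0 → F x y / ‖y‖ = F y x / ‖x‖) (x y : X) :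
    ‖x‖ * F x y = ‖y‖ * F y x := by
  rcases eq_or_ne x 0 with rfl | hx
  · simp
  rcases eq_or_ne y 0 with rfl | hy
  · simp
  have h := hsymm x y hx hy
  rw [div_eq_div_iff (norm_ne_zero_iff.mpr hy) (norm_ne_zero_iff.mpr hx)] at h
  linarith

theorem norm_mul_apply_self_of_isNormingFunctional {F : X → X →L[ℝ] ℝ}
    (hF : ∀ x : X, x ≠ 0 → IsNormingFunctional x (F x)) (v : X) :
    ‖v‖ * F v v = ‖v‖ ^ 2 := by
  rcases eq_or_ne v 0 with rfl | hv
  · simp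
  rw [(hF v hv).2, sq]

theorem stmt_1_general
    (F : X → X →L[ℝ] ℝ) (hF : ∀ x : X, x ≠ 0 → IsNormingFunctional x (F x))
    (hsymm : ∀ x y : X, x ≠ 0 → y ≠ 0 → F x y / ‖y‖ = F y x / ‖x‖) :
    ∃ B : X →ₗ[ℝ] X →ₗ[ℝ] ℝ, (∀ u v : X, B u v = B v u) ∧ ∀ v : X, B v v = ‖v‖ ^ 2 := by
  let g : X → X →ₗ[ℝ] ℝ := fun u => ‖u‖ • (F u : X →ₗ[ℝ] ℝ)
  have hg : ∀ u v, g u v = g v u := norm_mul_apply_comm_of_cosine_symm hsymm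
  exact ⟨LinearMap.mk₂OfSymm g hg, hg, norm_mul_apply_self_of_isNormingFunctional hF⟩

theorem stmt_1 [FiniteDimensional ℝ X] (hdim : 2 ≤ Module.finrank ℝ X)
    (hsm : SmoothNormedSpace X)
    (F : X → X →L[ℝ] ℝ) (hF : ∀ x : X, x ≠ 0 → IsNormingFunctional x (F x))
    (hsymm : ∀ x y : X, x ≠ 0 → y ≠ 0 → F x y / ‖y‖ = F y x / ‖x‖) :
    ∃ B : X →ₗ[ℝ] X →ₗ[ℝ] ℝ, (∀ u v : X, B u v = B v u) ∧ ∀ v : X, B v v = ‖v‖ ^ 2 :=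
  stmt_1_general F hF hsymm
end

section
/- Let X be a smooth Minkowski plane with a fixed nondegenerate alternating bilinear form [·,·]. Let x, y ∈ X be nonzero and let w ∈ X satisfy ‖w‖_a = 1, x ⊣_B w, and [x,w] > 0 (that is, w = b(x)). Then the limit as t → 0 of (‖x + t·y‖ − ‖x‖)/t exists and equals [y,w]. -/
open scoped Topology

variable {X : Type*} [NormedAddCommGroup X] [NormedSpace ℝ X]

/-- A nondegenerate alternating bilinear form. -/
def IsSymplecticForm (ω : X →ₗ[ℝ] X →ₗ[ℝ] ℝ) : Prop :=
  (∀ v : X, ω v v = 0) ∧ ∀ v : X, (∀ u : X, ω v u = 0) → v = 0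

/-- The antinorm associated to the form `ω`: `‖v‖_a = sup {|ω v u| : ‖u‖ = 1}`. -/
noncomputable def antinorm (ω : X →ₗ[ℝ] X →ₗ[ℝ] ℝ) (v : X) : ℝ :=
  sSup {r : ℝ | ∃ u : X, ‖u‖ = 1 ∧ r = |ω v u|}

open Filter Topology Module

/-! The functional `ω(·, w)` has norm `‖w‖_a = 1`, vanishes on `w` and is positive at `x`; since
`x ⊣_B w` and `x, w` span the plane, it norms `x`. In a smooth space the norming functional `h`
of `x` is the derivative of the norm at `x` in every direction: the difference quotient at `t` is
squeezed between `h y` and `F_t y` for a norming functional `F_t` of `x + t y`, and `F_t → h` by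
compactness of the dual unit ball together with uniqueness of `h`. -/

lemma BirkhoffOrth.abs_mul_norm_le {x w : X} (hxw : BirkhoffOrth x w) (a b : ℝ) :
    |a| * ‖x‖ ≤ ‖a • x + b • w‖ := by
  rcases eq_or_ne a 0 with rfl | ha
  · simp
  · calc |a| * ‖x‖ ≤ |a| * ‖x + (b / a) • w‖ := by gcongr; exact hxw _
      _ = ‖a • x + b • w‖ := by
        rw [← Real.norm_eq_abs, ← norm_smul, smul_add, smul_smul, mul_div_cancel₀ _ ha]

lemma BirkhoffOrth.opNorm_mul_norm_le {x w : X} (hxw : BirkhoffOrth x w)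
    (hspan : Submodule.span ℝ {x, w} = ⊤) {f : X →L[ℝ] ℝ} (hfw : f w = 0) :
    ‖f‖ * ‖x‖ ≤ |f x| := by
  rcases eq_or_ne x 0 with rfl | hx
  · simp
  have hx' : 0 < ‖x‖ := norm_pos_iff.2 hx
  rw [← le_div_iff₀ hx']
  refine f.opNorm_le_bound (by positivity) fun v => ?_
  obtain ⟨a, b, rfl⟩ := Submodule.mem_span_pair.1 (hspan ▸ Submodule.mem_top (x := v))
  rw [div_mul_eq_mul_div, le_div_iff₀ hx']
  calc ‖f (a • x + b • w)‖ * ‖x‖ = |f x| * (|a| * ‖x‖) := by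
        simp [hfw]; ring
    _ ≤ |f x| * ‖a • x + b • w‖ := by gcongr; exact hxw.abs_mul_norm_le a b

lemma LinearMap.IsAlt.span_pair_eq_top {K V : Type*} [Field K] [AddCommGroup V] [Module K V]
    {ω : V →ₗ[K] V →ₗ[K] K} (hω : ω.IsAlt) (hdim : finrank K V = 2) {x w : V} (hxw : ω x w ≠ 0) :
    Submodule.span K {x, w} = ⊤ := by
  have hind : LinearIndependent K ![x, w] := by
    refine LinearIndependent.pair_iff.2 fun s t hst => ?_
    have hs := congrArg (fun v => ω v w) hst
    have ht := congrArg (ω x) hst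
    simp only [map_add, map_smul, LinearMap.add_apply, LinearMap.smul_apply, smul_eq_mul,
      hω.self_eq_zero, mul_zero, add_zero, zero_add, map_zero, LinearMap.zero_apply] at hs ht
    exact ⟨(mul_eq_zero.1 hs).resolve_right hxw, (mul_eq_zero.1 ht).resolve_right hxw⟩
  simpa [Matrix.range_cons, Set.range_unique, Set.pair_comm] using
    hind.span_eq_top_of_card_eq_finrank (by simp [hdim])

lemma antinorm_eq_opNorm [FiniteDimensional ℝ X] (ω : X →ₗ[ℝ] X →ₗ[ℝ] ℝ) (v : X) :
    antinorm ω v = ‖LinearMap.toContinuousLinearMap (ω v)‖ := by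
  rw [← ContinuousLinearMap.sSup_sphere_eq_norm, antinorm]
  congr 1
  ext r
  simp [eq_comm]

theorem isNormingFunctional_flip_of_birkhoffOrth [FiniteDimensional ℝ X]
    (hdim : finrank ℝ X = 2) {ω : X →ₗ[ℝ] X →ₗ[ℝ] ℝ} (hω : ω.IsAlt) {x w : X}
    (hw_a : antinorm ω w = 1) (hxw : BirkhoffOrth x w) (hpos : 0 < ω x w) :
    IsNormingFunctional x (LinearMap.toContinuousLinearMap (ω.flip w)) := by
  set g := LinearMap.toContinuousLinearMap (ω.flip w)
  have hg_norm : ‖g‖ = 1 := by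
    have : g = -LinearMap.toContinuousLinearMap (ω w) := by
      ext v; simp [g, ← hω.neg w v]
    rw [this, norm_neg, ← antinorm_eq_opNorm, hw_a]
  have hle := hxw.opNorm_mul_norm_le (hω.span_pair_eq_top hdim hpos.ne') (f := g) (hω w)
  have hge := g.le_opNorm x
  have hgx : g x = ω x w := rfl
  rw [hg_norm, one_mul, hgx, abs_of_pos hpos] at hle
  rw [hg_norm, one_mul, hgx, Real.norm_of_nonneg hpos.le] at hge
  exact ⟨hg_norm, le_antisymm hge hle⟩

lemma add_apply_le_norm_add {f : X →L[ℝ] ℝ} {x : X} (hf : ‖f‖ ≤ 1) (hfx : f x = ‖x‖) (v : X) :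
    ‖x‖ + f v ≤ ‖x + v‖ :=
  calc ‖x‖ + f v = f (x + v) := by rw [map_add, hfx]
    _ ≤ ‖f‖ * ‖x + v‖ := (le_abs_self _).trans (f.le_opNorm _)
    _ ≤ ‖x + v‖ := mul_le_of_le_one_left (norm_nonneg _) hf

lemma abs_norm_add_smul_sub_div_sub_le {f g : X →L[ℝ] ℝ} {x y : X} {t : ℝ} (ht : t ≠ 0)
    (hf : ‖f‖ ≤ 1) (hfx : f x = ‖x‖) (hg : ‖g‖ ≤ 1) (hgx : g (x + t • y) = ‖x + t • y‖) :
    |(‖x + t • y‖ - ‖x‖) / t - f y| ≤ ‖g - f‖ * ‖y‖ := by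
  have lower : ‖x‖ + t * f y ≤ ‖x + t • y‖ := by
    simpa using add_apply_le_norm_add hf hfx (t • y)
  have upper : ‖x + t • y‖ + -(t * g y) ≤ ‖x‖ := by
    simpa using add_apply_le_norm_add hg hgx (-(t • y))
  have hdiff : |‖x + t • y‖ - ‖x‖ - t * f y| ≤ |t| * (‖g - f‖ * ‖y‖) :=
    calc |‖x + t • y‖ - ‖x‖ - t * f y| ≤ |t * (g y - f y)| := by
          rw [abs_of_nonneg (by linarith)]
          exact (by linarith : _ ≤ t * (g y - f y)).trans (le_abs_self _)
      _ = |t| * ‖(g - f) y‖ := abs_mul _ _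
      _ ≤ |t| * (‖g - f‖ * ‖y‖) := by gcongr; exact (g - f).le_opNorm y
  rwa [← mul_div_cancel_left₀ (f y) ht, ← sub_div, abs_div, div_le_iff₀' (abs_pos.2 ht)]

lemma MapClusterPt.eq_of_tendsto {α Y : Type*} [TopologicalSpace Y] [T2Space Y] {l : Filter α}
    {u : α → Y} {a b : Y} (ha : MapClusterPt a l u) (hb : Tendsto u l (𝓝 b)) : a = b :=
  eq_of_nhds_neBot (ha.neBot.mono (inf_le_inf_left _ hb))

lemma tendsto_of_unique_normingFunctional [FiniteDimensional ℝ X] {α : Type*} {l : Filter α}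
    {x : X} (hx : x ≠ 0) {h : X →L[ℝ] ℝ} (huniq : ∀ g, IsNormingFunctional x g → g = h)
    {v : α → X} (hv : Tendsto v l (𝓝 x)) {F : α → X →L[ℝ] ℝ}
    (hF_norm : ∀ a, ‖F a‖ ≤ 1) (hF_apply : ∀ a, F a (v a) = ‖v a‖) : Tendsto F l (𝓝 h) := by
  have hFx : Tendsto (fun a => F a x) l (𝓝 ‖x‖) := by
    have hsmall : Tendsto (fun a => F a (v a - x)) l (𝓝 0) :=
      squeeze_zero_norm (fun a => by simpa using (F a).le_of_opNorm_le (hF_norm a) (v a - x))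
        (tendsto_iff_norm_sub_tendsto_zero.1 hv)
    simpa [hF_apply] using hv.norm.sub hsmall
  refine (isCompact_closedBall (0 : X →L[ℝ] ℝ) 1).tendsto_nhds_of_unique_mapClusterPt
    (.of_forall fun a => mem_closedBall_zero_iff.2 (hF_norm a)) fun g hg hcl => huniq g ?_
  have hgx : g x = ‖x‖ :=
    (hcl.tendsto_comp ((ContinuousLinearMap.apply ℝ ℝ x).continuous.tendsto g)).eq_of_tendsto hFx
  refine ⟨le_antisymm (mem_closedBall_zero_iff.1 hg) ?_, hgx⟩
  have := g.le_opNorm x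
  rw [hgx, Real.norm_of_nonneg (norm_nonneg _)] at this
  exact le_of_mul_le_mul_right (by linarith) (norm_pos_iff.2 hx)

theorem tendsto_norm_add_smul_sub_div_of_unique [FiniteDimensional ℝ X] {x : X} (hx : x ≠ 0)
    {h : X →L[ℝ] ℝ} (hh : IsNormingFunctional x h) (huniq : ∀ g, IsNormingFunctional x g → g = h)
    (y : X) : Tendsto (fun t : ℝ => (‖x + t • y‖ - ‖x‖) / t) (𝓝[≠] 0) (𝓝 (h y)) := by
  choose F hF_norm hF_apply using fun t : ℝ => exists_dual_vector'' ℝ (x + t • y)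
  have hline : Tendsto (fun t : ℝ => x + t • y) (𝓝 0) (𝓝 x) := by
    have hcont : Continuous fun t : ℝ => x + t • y := by fun_prop
    simpa using hcont.tendsto 0
  have hFh : Tendsto F (𝓝 0) (𝓝 h) :=
    tendsto_of_unique_normingFunctional hx huniq hline hF_norm hF_apply
  rw [← tendsto_sub_nhds_zero_iff]
  have hbound : Tendsto (fun t => ‖F t - h‖ * ‖y‖) (𝓝[≠] 0) (𝓝 0) := by
    simpa using ((hFh.sub_const h).norm.mul_const ‖y‖).mono_left nhdsWithin_le_nhds
  refine squeeze_zero_norm' ?_ hbound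
  filter_upwards [self_mem_nhdsWithin] with t ht
  exact abs_norm_add_smul_sub_div_sub_le ht hh.1.le hh.2 (hF_norm t) (hF_apply t)

theorem stmt_3_general [FiniteDimensional ℝ X] (hdim : Module.finrank ℝ X = 2)
    (hsm : SmoothNormedSpace X)
    (ω : X →ₗ[ℝ] X →ₗ[ℝ] ℝ) (hω : IsSymplecticForm ω)
    (x y : X) (hx : x ≠ 0)
    (w : X) (hw_a : antinorm ω w = 1) (hw_orth : BirkhoffOrth x w) (hw_pos : 0 < ω x w) :
    Filter.Tendsto (fun t : ℝ => (‖x + t • y‖ - ‖x‖) / t) (𝓝[≠] (0 : ℝ)) (𝓝 (ω y w)) := by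
  have hnorm := isNormingFunctional_flip_of_birkhoffOrth hdim hω.1 hw_a hw_orth hw_pos
  exact tendsto_norm_add_smul_sub_div_of_unique hx hnorm
    (fun g hg => (hsm x hx).unique hg hnorm) y

theorem stmt_3 [FiniteDimensional ℝ X] (hdim : Module.finrank ℝ X = 2)
    (hsm : SmoothNormedSpace X)
    (ω : X →ₗ[ℝ] X →ₗ[ℝ] ℝ) (hω : IsSymplecticForm ω)
    (x y : X) (hx : x ≠ 0) (hy : y ≠ 0)
    (w : X) (hw_a : antinorm ω w = 1) (hw_orth : BirkhoffOrth x w) (hw_pos : 0 < ω x w) :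
    Filter.Tendsto (fun t : ℝ => (‖x + t • y‖ - ‖x‖) / t) (𝓝[≠] (0 : ℝ)) (𝓝 (ω y w)) :=
  stmt_3_general hdim hsm ω hω x y hx w hw_a hw_orth hw_pos
end

section
/- Let X be a smooth Radon plane whose nondegenerate alternating bilinear form [·,·] is normalized so that ‖v‖_a = ‖v‖ for all v ∈ X. Let x, y ∈ X be unit vectors and let w ∈ X satisfy ‖w‖_a = 1, x ⊣_B w, and [x,w] > 0 (that is, w = b(x)). Then y = cm(x,y)·x + sn(x,y)·w, i.e. y = f_x(y)·x + [x,y]·w. -/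
variable {X : Type*} [NormedAddCommGroup X] [NormedSpace ℝ X]

/-! `x ⊣_B w` says that the line `x + ℝ w` avoids the open ball of radius `‖x‖`; in the plane this
gives `|g u| ‖x‖ ≤ |g x| ‖u‖` for every linear functional `g` vanishing at `w`. For `g` the
first coordinate in the basis `x, w` (scaled by `‖x‖`) this produces a norming functional of `x`
killing `w`, which by smoothness is `f_x`, so `f_x` is that coordinate. For `g = [w, ·]` it gives
`‖w‖_a = |[w, x]| = [x, w]`, so `[x, w] = 1` and `[x, ·]` is the second coordinate. -/

theorem exists_smul_add_smul_eq_of_finrank_eq_two {K V : Type*} [Field K] [AddCommGroup V]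
    [Module K V] (hdim : Module.finrank K V = 2) {p q : V} (hpq : LinearIndependent K ![p, q])
    (z : V) : ∃ a b : K, a • p + b • q = z := by
  have hspan := hpq.span_eq_top_of_card_eq_finrank (by simp [hdim])
  rw [Matrix.range_cons, Matrix.range_cons, Matrix.range_empty, Set.union_empty,
    Set.singleton_union] at hspan
  exact Submodule.mem_span_pair.1 (hspan ▸ Submodule.mem_top)

namespace BirkhoffOrth

variable {x w : X}

theorem abs_mul_norm_le_norm_smul_add_smul (h : BirkhoffOrth x w) (a b : ℝ) :
    |a| * ‖x‖ ≤ ‖a • x + b • w‖ := by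
  rcases eq_or_ne a 0 with rfl | ha
  · simp
  calc |a| * ‖x‖ ≤ |a| * ‖x + (b / a) • w‖ := by gcongr; exact h _
    _ = ‖a • x + b • w‖ := by
      rw [← Real.norm_eq_abs, ← norm_smul, smul_add, smul_smul, mul_div_cancel₀ b ha]

theorem linearIndependent (h : BirkhoffOrth x w) (hx : x ≠ 0) (hw : w ≠ 0) :
    LinearIndependent ℝ ![x, w] := by
  refine linearIndependent_fin2.2 ⟨hw, fun a (hax : a • w = x) => hx ?_⟩
  have := h (-a)
  rwa [neg_smul, hax, add_neg_cancel, norm_zero, norm_le_zero_iff] at this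

theorem abs_apply_mul_norm_le (hdim : Module.finrank ℝ X = 2) (h : BirkhoffOrth x w)
    (hx : x ≠ 0) (hw : w ≠ 0) (g : X →ₗ[ℝ] ℝ) (hg : g w = 0) (u : X) :
    |g u| * ‖x‖ ≤ |g x| * ‖u‖ := by
  obtain ⟨a, b, rfl⟩ :=
    exists_smul_add_smul_eq_of_finrank_eq_two hdim (h.linearIndependent hx hw) u
  have hgu : g (a • x + b • w) = a * g x := by simp [hg]
  rw [hgu, abs_mul, mul_comm |a|, mul_assoc]
  gcongr
  exact h.abs_mul_norm_le_norm_smul_add_smul a b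

theorem exists_isNormingFunctional_apply_eq_zero (hdim : Module.finrank ℝ X = 2)
    (h : BirkhoffOrth x w) (hx : x ≠ 0) (hw : w ≠ 0) :
    ∃ f : X →L[ℝ] ℝ, IsNormingFunctional x f ∧ f w = 0 := by
  let B := basisOfLinearIndependentOfCardEqFinrank (h.linearIndependent hx hw) (by simp [hdim])
  have hBx : B 0 = x := by simp [B]
  have hBw : B 1 = w := by simp [B]
  have hgx : B.coord 0 x = 1 := by simp [← hBx]
  have hgw : B.coord 0 w = 0 := by simp [← hBw]
  have hbound : ∀ u, ‖(‖x‖ • B.coord 0) u‖ ≤ 1 * ‖u‖ := fun u => by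
    simpa [abs_mul, mul_comm, hgx] using h.abs_apply_mul_norm_le hdim hx hw _ hgw u
  let f := (‖x‖ • B.coord 0).mkContinuous 1 hbound
  have hfx : f x = ‖x‖ := by simp [f, hgx]
  refine ⟨f, ⟨le_antisymm (LinearMap.mkContinuous_norm_le _ zero_le_one _) ?_, hfx⟩, ?_⟩
  · have := f.le_opNorm x
    rw [hfx, Real.norm_of_nonneg (norm_nonneg x)] at this
    exact (le_mul_iff_one_le_left (norm_pos_iff.2 hx)).1 this
  · simp [f, hgw]

end BirkhoffOrth

theorem SmoothNormedSpace.apply_eq_zero_of_birkhoffOrth (hsm : SmoothNormedSpace X)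
    (hdim : Module.finrank ℝ X = 2) {x w : X} {f : X →L[ℝ] ℝ} (hf : IsNormingFunctional x f)
    (h : BirkhoffOrth x w) (hx : x ≠ 0) : f w = 0 := by
  rcases eq_or_ne w 0 with rfl | hw
  · exact map_zero f
  obtain ⟨g, hg, hgw⟩ := h.exists_isNormingFunctional_apply_eq_zero hdim hx hw
  rwa [(hsm x hx).unique hf hg]

theorem antinorm_eq_abs_of_birkhoffOrth (hdim : Module.finrank ℝ X = 2)
    {ω : X →ₗ[ℝ] X →ₗ[ℝ] ℝ} {x w : X} (hx : ‖x‖ = 1) (h : BirkhoffOrth x w) (hw : w ≠ 0)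
    (hww : ω w w = 0) : antinorm ω w = |ω w x| := by
  have hx0 : x ≠ 0 := norm_ne_zero_iff.1 (hx ▸ one_ne_zero)
  refine IsGreatest.csSup_eq ⟨⟨x, hx, rfl⟩, ?_⟩
  rintro _ ⟨u, hu, rfl⟩
  simpa [hx, hu] using h.abs_apply_mul_norm_le hdim hx0 hw (ω w) hww u

theorem stmt_4_general (hdim : Module.finrank ℝ X = 2)
    (hsm : SmoothNormedSpace X)
    (ω : X →ₗ[ℝ] X →ₗ[ℝ] ℝ) (hω : IsSymplecticForm ω)
    (F : X → X →L[ℝ] ℝ) (hF : ∀ x : X, x ≠ 0 → IsNormingFunctional x (F x))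
    (x y : X) (hx : ‖x‖ = 1)
    (w : X) (hw_a : antinorm ω w = 1) (hw_orth : BirkhoffOrth x w) (hw_pos : 0 < ω x w) :
    y = F x y • x + ω x y • w := by
  have hx0 : x ≠ 0 := norm_ne_zero_iff.1 (hx ▸ one_ne_zero)
  have hw0 : w ≠ 0 := by rintro rfl; simp at hw_pos
  have hωxw : ω x w = 1 := by
    rw [← hw_a, antinorm_eq_abs_of_birkhoffOrth hdim hx hw_orth hw0 (hω.1 w),
      ← LinearMap.IsAlt.neg hω.1 x w, abs_neg, abs_of_pos hw_pos]
  have hFxw : F x w = 0 := hsm.apply_eq_zero_of_birkhoffOrth hdim (hF x hx0) hw_orth hx0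
  obtain ⟨s, t, rfl⟩ :=
    exists_smul_add_smul_eq_of_finrank_eq_two hdim (hw_orth.linearIndependent hx0 hw0) y
  simp [hFxw, (hF x hx0).2, hx, hω.1 x, hωxw]

theorem stmt_4 [FiniteDimensional ℝ X] (hdim : Module.finrank ℝ X = 2)
    (hsm : SmoothNormedSpace X)
    (hRadon : ∀ u v : X, BirkhoffOrth u v → BirkhoffOrth v u)
    (ω : X →ₗ[ℝ] X →ₗ[ℝ] ℝ) (hω : IsSymplecticForm ω)
    (hnormalized : ∀ v : X, antinorm ω v = ‖v‖)
    (F : X → X →L[ℝ] ℝ) (hF : ∀ x : X, x ≠ 0 → IsNormingFunctional x (F x))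
    (x y : X) (hx : ‖x‖ = 1) (hy : ‖y‖ = 1)
    (w : X) (hw_a : antinorm ω w = 1) (hw_orth : BirkhoffOrth x w) (hw_pos : 0 < ω x w) :
    y = F x y • x + ω x y • w :=
  stmt_4_general hdim hsm ω hω F hF x y hx w hw_a hw_orth hw_pos
end

section
/- Let X be a smooth, strictly convex Minkowski plane and let x, y ∈ X be linearly independent unit vectors with x ⊣_B y. Suppose there exist c ∈ X, r > 0 and α > 0 such that ‖α·x − c‖ = r, ‖α·y − c‖ = r, and ‖t·x − c‖ ≥ r and ‖t·y − c‖ ≥ r for every t ∈ ℝ (i.e. some circle inscribed in the angle formed by the rays from the origin through x and y touches the two rays at points α·x and α·y equidistant from the origin, so γ(x,y) = 1). Then y ⊣_B x. -/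
variable {X : Type*} [NormedAddCommGroup X] [NormedSpace ℝ X]

/-! A functional `f` of norm at most one with `f x = ‖x‖` and `f y = 0` exists since `x ⊣_B y`,
and in the plane it satisfies `|f v| = ‖v‖` whenever `v ⊣_B y`. For `v = α • y - c` this forces
`f v = -r` (the value `r` would give `f (α • x - c) = r + α`), and strict convexity then puts the
centre at `c = α • y + r • x`. Hence `u = α • x - c = (α - r) • x - α • y`; `u ⊣_B x` gives
`r ≤ α`, the strict triangle inequality rules out `r < α`, and for `α = r` we get `u = -α • y`,
so `u ⊣_B x` is `y ⊣_B x`. -/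

theorem abs_apply_le_norm_of_norm_le_one {f : X →L[ℝ] ℝ} (hf : ‖f‖ ≤ 1) (z : X) :
    |f z| ≤ ‖z‖ := by
  simpa using f.le_of_opNorm_le hf z

theorem eq_of_apply_eq_norm [StrictConvexSpace ℝ X] {f : X →L[ℝ] ℝ} (hf : ‖f‖ ≤ 1) {a b : X}
    (hab : ‖a‖ = ‖b‖) (ha : f a = ‖a‖) (hb : f b = ‖b‖) : a = b := by
  refine eq_of_norm_eq_of_norm_add_eq hab (le_antisymm (norm_add_le a b) ?_)
  calc ‖a‖ + ‖b‖ = f (a + b) := by rw [map_add, ha, hb]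
    _ ≤ ‖a + b‖ := (le_abs_self _).trans (abs_apply_le_norm_of_norm_le_one hf _)

theorem exists_smul_add_smul_eq {K V : Type*} [Field K] [AddCommGroup V] [Module K V]
    (hdim : Module.finrank K V = 2) {x y : V} (hind : LinearIndependent K ![x, y]) (v : V) :
    ∃ p q : K, p • x + q • y = v := by
  have hspan := hind.span_eq_top_of_card_eq_finrank (by simp [hdim])
  rw [Matrix.range_cons_cons_empty] at hspan
  exact Submodule.mem_span_pair.mp (hspan ▸ Submodule.mem_top)

namespace BirkhoffOrth

theorem exists_dual {a b : X} (h : BirkhoffOrth a b) :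
    ∃ f : X →L[ℝ] ℝ, ‖f‖ ≤ 1 ∧ f a = ‖a‖ ∧ f b = 0 := by
  set S := ℝ ∙ b
  -- `a ⊣_B b` says exactly that the image of `a` in `X ⧸ S` keeps its norm.
  have hnorm : ‖S.mkQ a‖ = ‖a‖ := by
    refine le_antisymm (Submodule.Quotient.norm_mk_le S a) ?_
    have hdist : ‖S.mkQ a‖ = Metric.infDist a S :=
      QuotientAddGroup.norm_mk (S := S.toAddSubgroup) a
    rw [hdist, Metric.le_infDist ⟨0, S.zero_mem⟩]
    intro m hm
    obtain ⟨t, rfl⟩ := Submodule.mem_span_singleton.mp hm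
    simpa [dist_eq_norm, sub_eq_add_neg, ← neg_smul] using h (-t)
  obtain ⟨g, hg, hga⟩ := exists_dual_vector'' ℝ (S.mkQ a)
  refine ⟨g.comp S.mkQL, ?_, by rw [← hnorm]; exact hga, ?_⟩
  · refine ContinuousLinearMap.opNorm_le_bound _ zero_le_one fun z => ?_
    calc ‖g (S.mkQ z)‖ ≤ ‖g‖ * ‖S.mkQ z‖ := g.le_opNorm _
      _ ≤ 1 * ‖z‖ := mul_le_mul hg (Submodule.Quotient.norm_mk_le S z) (norm_nonneg _) zero_le_one
  · rw [ContinuousLinearMap.comp_apply, Submodule.mkQL_apply, Submodule.mkQ_apply,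
      (Submodule.Quotient.mk_eq_zero S).2 (Submodule.mem_span_singleton_self b), map_zero]

theorem smul_left {a b : X} (h : BirkhoffOrth a b) (s : ℝ) : BirkhoffOrth (s • a) b := by
  intro t
  rcases eq_or_ne s 0 with rfl | hs
  · simp
  calc ‖s • a‖ = |s| * ‖a‖ := norm_smul s a
    _ ≤ |s| * ‖a + (t / s) • b‖ := by gcongr; exact h _
    _ = ‖s • a + t • b‖ := by
      rw [← Real.norm_eq_abs, ← norm_smul, smul_add, smul_smul, mul_div_cancel₀ t hs]

theorem smul_left_iff {a b : X} {s : ℝ} (hs : s ≠ 0) :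
    BirkhoffOrth (s • a) b ↔ BirkhoffOrth a b :=
  ⟨fun h => by simpa [smul_smul, inv_mul_cancel₀ hs] using h.smul_left s⁻¹,
    fun h => h.smul_left s⟩

theorem abs_apply_eq_norm (hdim : Module.finrank ℝ X = 2) {x y v : X}
    (hind : LinearIndependent ℝ ![x, y]) {f : X →L[ℝ] ℝ} (hf : ‖f‖ ≤ 1) (hfx : f x = ‖x‖)
    (hfy : f y = 0) (hv : BirkhoffOrth v y) : |f v| = ‖v‖ := by
  obtain ⟨p, q, rfl⟩ := exists_smul_add_smul_eq hdim hind v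
  refine le_antisymm (abs_apply_le_norm_of_norm_le_one hf _) ?_
  calc ‖p • x + q • y‖ ≤ ‖p • x + q • y + (-q) • y‖ := hv (-q)
    _ = |f (p • x + q • y)| := by simp [hfx, hfy, norm_smul]

end BirkhoffOrth

theorem birkhoffOrth_smul_sub_of_forall_le {x c : X} {α : ℝ}
    (h : ∀ t : ℝ, ‖α • x - c‖ ≤ ‖t • x - c‖) : BirkhoffOrth (α • x - c) x := by
  intro t
  simpa [add_smul, sub_add_eq_add_sub] using h (α + t)

theorem sub_lt_norm_smul_sub_smul [StrictConvexSpace ℝ X] {x y : X} (hxy : x ≠ y)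
    (hx : ‖x‖ = 1) (hy : ‖y‖ = 1) {s : ℝ} (hs : 0 < s) (α : ℝ) : α - s < ‖s • x - α • y‖ := by
  obtain ⟨g, hg, hgy⟩ := exists_dual_vector'' ℝ y
  replace hgy : g y = 1 := by simpa [hy] using hgy
  have hgx : g x < 1 := by
    refine lt_of_le_of_ne ?_ fun h => hxy (eq_of_apply_eq_norm hg (hx.trans hy.symm) ?_ ?_)
    · simpa [hx] using (le_abs_self _).trans (abs_apply_le_norm_of_norm_le_one hg x)
    · rw [h, hx]
    · rw [hgy, hy]
  have := neg_le_of_abs_le (abs_apply_le_norm_of_norm_le_one hg (s • x - α • y))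
  simp only [map_sub, map_smul, hgy, smul_eq_mul] at this
  nlinarith

theorem center_eq_of_tangent (hdim : Module.finrank ℝ X = 2) [StrictConvexSpace ℝ X]
    {x y c : X} {r α : ℝ} (hx : ‖x‖ = 1) (hind : LinearIndependent ℝ ![x, y])
    (hxy : BirkhoffOrth x y) (hr : 0 < r) (hα : 0 < α) (hcx : ‖α • x - c‖ ≤ r)
    (hcy : ‖α • y - c‖ = r) (hvy : BirkhoffOrth (α • y - c) y) : c = α • y + r • x := by
  obtain ⟨f, hf, hfx, hfy⟩ := hxy.exists_dual
  have hfv : f (α • y - c) = -r := by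
    have habs := hvy.abs_apply_eq_norm hdim hind hf hfx hfy
    have hfu := (le_abs_self _).trans
      ((abs_apply_le_norm_of_norm_le_one hf (α • x - c)).trans hcx)
    have hfuv : f (α • x - c) = f (α • y - c) + α := by simp [hfx, hfy, hx]; ring
    rcases (abs_eq hr.le).mp (habs.trans hcy) with h | h <;> linarith
  have hcy' : ‖c - α • y‖ = r := by rw [← norm_neg, neg_sub, hcy]
  have hrx : ‖r • x‖ = r := by rw [norm_smul, hx, Real.norm_of_nonneg hr.le, mul_one]
  refine sub_eq_iff_eq_add'.mp (eq_of_apply_eq_norm hf (hcy'.trans hrx.symm) ?_ ?_)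
  · rw [hcy', ← neg_sub, map_neg, hfv, neg_neg]
  · rw [hrx, map_smul, hfx, hx, smul_eq_mul, mul_one]

theorem stmt_7_general (hdim : Module.finrank ℝ X = 2)
    [StrictConvexSpace ℝ X]
    (x y : X) (hx : ‖x‖ = 1) (hy : ‖y‖ = 1) (hind : LinearIndependent ℝ ![x, y])
    (hxy : BirkhoffOrth x y)
    (c : X) (r : ℝ) (hr : 0 < r) (α : ℝ) (hα : 0 < α)
    (htouchx : ‖α • x - c‖ = r) (htouchy : ‖α • y - c‖ = r)
    (hsidex : ∀ t : ℝ, r ≤ ‖t • x - c‖) (hsidey : ∀ t : ℝ, r ≤ ‖t • y - c‖) :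
    BirkhoffOrth y x := by
  have hux : BirkhoffOrth (α • x - c) x :=
    birkhoffOrth_smul_sub_of_forall_le fun t => htouchx ▸ hsidex t
  have hvy : BirkhoffOrth (α • y - c) y :=
    birkhoffOrth_smul_sub_of_forall_le fun t => htouchy ▸ hsidey t
  have hc := center_eq_of_tangent hdim hx hind hxy hr hα htouchx.le htouchy hvy
  have hu : α • x - c = (α - r) • x - α • y := by rw [hc]; module
  have hrα : r ≤ α := by
    have h := hux (r - α)
    rwa [htouchx, hu, show (α - r) • x - α • y + (r - α) • x = -(α • y) by module, norm_neg,
      norm_smul, hy, Real.norm_of_nonneg hα.le, mul_one] at h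
  rcases hrα.eq_or_lt with rfl | hlt
  · rw [hu, sub_self, zero_smul, zero_sub, ← neg_smul] at hux
    exact (BirkhoffOrth.smul_left_iff (neg_ne_zero.mpr hr.ne')).mp hux
  · have hne : x ≠ y := by simpa using hind.injective.ne zero_ne_one
    have := sub_lt_norm_smul_sub_smul hne hx hy (sub_pos.mpr hlt) α
    rw [← hu, htouchx] at this
    linarith

theorem stmt_7 [FiniteDimensional ℝ X] (hdim : Module.finrank ℝ X = 2)
    [StrictConvexSpace ℝ X] (hsm : SmoothNormedSpace X)
    (x y : X) (hx : ‖x‖ = 1) (hy : ‖y‖ = 1) (hind : LinearIndependent ℝ ![x, y])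
    (hxy : BirkhoffOrth x y)
    (c : X) (r : ℝ) (hr : 0 < r) (α : ℝ) (hα : 0 < α)
    (htouchx : ‖α • x - c‖ = r) (htouchy : ‖α • y - c‖ = r)
    (hsidex : ∀ t : ℝ, r ≤ ‖t • x - c‖) (hsidey : ∀ t : ℝ, r ≤ ‖t • y - c‖) :
    BirkhoffOrth y x :=
  stmt_7_general hdim x y hx hy hind hxy c r hr α hα htouchx htouchy hsidex hsidey
end

section
/- Let X be a smooth finite-dimensional real normed space and let x, y, z ∈ X be nonzero vectors with x = y + z and ‖x‖ = ‖y‖ = ‖z‖. Define the symmetric cosine ca(u,v) := (cm(u,v) + cm(v,u))/2 for nonzero u, v. Then ca(x,y) + ca(x,z) + ca(y,−z) = 3/2. -/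
/-! Write r = ‖x‖ = ‖y‖ = ‖z‖. Applying the norming functionals of x, y, z to x = y + z gives
f_x y + f_x z = r, f_y x = r + f_y z and f_z x = r + f_z y, and smoothness forces f_{-z} = -f_z.
After multiplying by 2r the three symmetric cosines then add up to r + 2r. -/

variable {X : Type*} [NormedAddCommGroup X] [NormedSpace ℝ X]

theorem IsNormingFunctional.neg {x : X} {f : X →L[ℝ] ℝ} (hf : IsNormingFunctional x f) :
    IsNormingFunctional (-x) (-f) := by
  refine ⟨by rw [norm_neg, hf.1], ?_⟩
  rw [neg_apply, map_neg, neg_neg, norm_neg, hf.2]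

theorem SmoothNormedSpace.eq_neg_of_isNormingFunctional_neg (hsm : SmoothNormedSpace X)
    {x : X} (hx : x ≠ 0) {f g : X →L[ℝ] ℝ} (hf : IsNormingFunctional x f)
    (hg : IsNormingFunctional (-x) g) : g = -f :=
  (hsm (-x) (neg_ne_zero.mpr hx)).unique hg hf.neg

theorem stmt_9_general (hsm : SmoothNormedSpace X)
    (F : X → X →L[ℝ] ℝ) (hF : ∀ x : X, x ≠ 0 → IsNormingFunctional x (F x))
    -- the symmetric cosine `ca u v = (cm u v + cm v u)/2`
    (ca : X → X → ℝ)
    (hca : ∀ u v : X, u ≠ 0 → v ≠ 0 → ca u v = (F u v / ‖v‖ + F v u / ‖u‖) / 2)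
    (x y z : X) (hx : x ≠ 0) (hy : y ≠ 0) (hz : z ≠ 0)
    (hsum : x = y + z) (hxy : ‖x‖ = ‖y‖) (hxz : ‖x‖ = ‖z‖) :
    ca x y + ca x z + ca y (-z) = 3 / 2 := by
  have hnz : -z ≠ 0 := neg_ne_zero.mpr hz
  have hr : ‖x‖ ≠ 0 := norm_ne_zero_iff.mpr hx
  have hFnz : F (-z) = -F z := hsm.eq_neg_of_isNormingFunctional_neg hz (hF z hz) (hF (-z) hnz)
  have hxyz : F x y + F x z = ‖x‖ := by rw [← map_add, ← hsum, (hF x hx).2]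
  have hyx : F y x = ‖y‖ + F y z := by rw [hsum, map_add, (hF y hy).2]
  have hzx : F z x = ‖z‖ + F z y := by rw [hsum, map_add, (hF z hz).2, add_comm]
  rw [hca x y hx hy, hca x z hx hz, hca y (-z) hy hnz, hFnz, hyx, hzx, norm_neg, ← hxy, ← hxz]
  simp only [map_neg, neg_apply]
  field_simp
  linarith

theorem stmt_9 [FiniteDimensional ℝ X] (hsm : SmoothNormedSpace X)
    (F : X → X →L[ℝ] ℝ) (hF : ∀ x : X, x ≠ 0 → IsNormingFunctional x (F x))
    -- the symmetric cosine `ca u v = (cm u v + cm v u)/2`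
    (ca : X → X → ℝ)
    (hca : ∀ u v : X, u ≠ 0 → v ≠ 0 → ca u v = (F u v / ‖v‖ + F v u / ‖u‖) / 2)
    (x y z : X) (hx : x ≠ 0) (hy : y ≠ 0) (hz : z ≠ 0)
    (hsum : x = y + z) (hxy : ‖x‖ = ‖y‖) (hxz : ‖x‖ = ‖z‖) :
    ca x y + ca x z + ca y (-z) = 3 / 2 :=
  stmt_9_general hsm F hF ca hca x y z hx hy hz hsum hxy hxz
end

section
/- Let X be a smooth Minkowski plane with a fixed nondegenerate alternating bilinear form [·,·], and let γ : ℝ → X be a differentiable curve with ‖γ(s)‖ = 1 and ‖γ'(s)‖ = 1 for all s and [γ(s), γ'(s)] > 0 (a positively oriented arc length parameterization of the unit circle). Fix s₀ and let w ∈ X satisfy ‖w‖_a = 1, γ(s₀) ⊣_B w and [γ(s₀), w] > 0 (that is, w = b(γ(s₀))). Then γ'(s₀) = w/‖w‖. -/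
/-!
Since `[γ(s₀), w] > 0`, the vectors `x = γ(s₀)` and `w` form a basis of the plane, and Birkhoff
orthogonality `x ⊣_B w` makes the coordinate functional `F` with `F x = 1`, `F w = 0` a norming
functional of `x`. As `F ∘ γ ≤ ‖γ‖ = 1` attains its maximum at `s₀`, `F (γ'(s₀)) = 0`, so
`γ'(s₀)` is a multiple of `w`; its length and orientation fix the multiple as `‖w‖⁻¹`.
-/

variable {X : Type*} [NormedAddCommGroup X] [NormedSpace ℝ X]

theorem linearIndependent_pair_of_apply_ne_zero {K M : Type*} [Field K] [AddCommGroup M]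
    [Module K M] (ω : M →ₗ[K] M →ₗ[K] K) (hω : ∀ v, ω v v = 0) {x w : M}
    (hxw : ω x w ≠ 0) :
    LinearIndependent K ![x, w] := by
  rw [LinearIndependent.pair_iff]
  intro s t hst
  have hs : s * ω x w = 0 := by simpa [hω] using congrArg (fun z => ω z w) hst
  have ht : t * ω x w = 0 := by simpa [hω] using congrArg (ω x) hst
  exact ⟨(mul_eq_zero.1 hs).resolve_right hxw, (mul_eq_zero.1 ht).resolve_right hxw⟩

theorem Module.Basis.repr_fin_two {K M : Type*} [CommSemiring K] [AddCommMonoid M] [Module K M]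
    (B : Module.Basis (Fin 2) K M) (z : M) : B.repr z 0 • B 0 + B.repr z 1 • B 1 = z := by
  simpa only [Fin.sum_univ_two] using B.sum_repr z

/-- Birkhoff orthogonality `B 0 ⊣_B B 1` says exactly that the first coordinate functional has
norm at most `‖B 0‖⁻¹`. -/
theorem BirkhoffOrth.abs_coord_mul_norm_le {B : Module.Basis (Fin 2) ℝ X}
    (h : BirkhoffOrth (B 0) (B 1)) (z : X) : |B.coord 0 z| * ‖B 0‖ ≤ ‖z‖ := by
  rw [Module.Basis.coord_apply]
  set a := B.repr z 0
  set b := B.repr z 1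
  rcases eq_or_ne a 0 with ha | ha
  · simp [ha]
  · calc |a| * ‖B 0‖ ≤ |a| * ‖B 0 + (b / a) • B 1‖ := by gcongr; exact h (b / a)
      _ = ‖a • B 0 + b • B 1‖ := by
        rw [← Real.norm_eq_abs, ← norm_smul, smul_add, smul_smul, mul_div_cancel₀ _ ha]
      _ = ‖z‖ := by rw [B.repr_fin_two]

theorem apply_eq_zero_of_isLocalMax_norm {γ : ℝ → X} {v : X} {s₀ : ℝ} (f : X →L[ℝ] ℝ)
    (hf : ∀ z, f z ≤ ‖z‖) (hfγ : f (γ s₀) = ‖γ s₀‖)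
    (hmax : IsLocalMax (fun s => ‖γ s‖) s₀) (hγ : HasDerivAt γ v s₀) : f v = 0 := by
  have hmax' : IsLocalMax (fun s => f (γ s)) s₀ := by
    filter_upwards [hmax] with s hs
    exact (hf (γ s)).trans (hfγ ▸ hs)
  exact hmax'.hasDerivAt_eq_zero (f.hasFDerivAt.comp_hasDerivAt s₀ hγ)

theorem stmt_16_general [FiniteDimensional ℝ X] (hdim : Module.finrank ℝ X = 2)
    (ω : X →ₗ[ℝ] X →ₗ[ℝ] ℝ) (hω : IsSymplecticForm ω)
    (γ γ' : ℝ → X) (hderiv : ∀ s : ℝ, HasDerivAt γ (γ' s) s)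
    (hunit : ∀ s : ℝ, ‖γ s‖ = 1) (hspeed : ∀ s : ℝ, ‖γ' s‖ = 1)
    (horient : ∀ s : ℝ, 0 < ω (γ s) (γ' s))
    (s₀ : ℝ) (w : X)
    (hw_orth : BirkhoffOrth (γ s₀) w) (hw_pos : 0 < ω (γ s₀) w) :
    γ' s₀ = ‖w‖⁻¹ • w := by
  let B := basisOfLinearIndependentOfCardEqFinrank
    (linearIndependent_pair_of_apply_ne_zero ω hω.1 hw_pos.ne') (by simp [hdim])
  have hB0 : B 0 = γ s₀ := by simp [B, coe_basisOfLinearIndependentOfCardEqFinrank]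
  have hB1 : B 1 = w := by simp [B, coe_basisOfLinearIndependentOfCardEqFinrank]
  have hbound (z : X) : |B.coord 0 z| ≤ ‖z‖ := by
    have horth : BirkhoffOrth (B 0) (B 1) := hB0 ▸ hB1 ▸ hw_orth
    simpa [hB0, hunit s₀] using horth.abs_coord_mul_norm_le z
  let F : X →L[ℝ] ℝ := (B.coord 0).mkContinuous 1 fun z => by simpa using hbound z
  have hFv : F (γ' s₀) = 0 :=
    apply_eq_zero_of_isLocalMax_norm F (fun z => (le_abs_self _).trans (hbound z))
      (by rw [hunit s₀, ← hB0]; simp [F]) (.of_forall fun s => by simp [hunit]) (hderiv s₀)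
  set c := B.repr (γ' s₀) 1
  have hvw : γ' s₀ = c • w := by
    simpa [← hB1, show B.repr (γ' s₀) 0 = 0 from hFv] using (B.repr_fin_two (γ' s₀)).symm
  have hc : 0 < c := pos_of_mul_pos_left (by simpa [hvw] using horient s₀) hw_pos.le
  have hcw : c * ‖w‖ = 1 := by
    simpa [hvw, norm_smul, abs_of_pos hc] using hspeed s₀
  rw [hvw, eq_inv_of_mul_eq_one_left hcw]

theorem stmt_16 [FiniteDimensional ℝ X] (hdim : Module.finrank ℝ X = 2)
    (hsm : SmoothNormedSpace X)
    (ω : X →ₗ[ℝ] X →ₗ[ℝ] ℝ) (hω : IsSymplecticForm ω)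
    (γ γ' : ℝ → X) (hderiv : ∀ s : ℝ, HasDerivAt γ (γ' s) s)
    (hunit : ∀ s : ℝ, ‖γ s‖ = 1) (hspeed : ∀ s : ℝ, ‖γ' s‖ = 1)
    (horient : ∀ s : ℝ, 0 < ω (γ s) (γ' s))
    (s₀ : ℝ) (w : X) (hw_a : antinorm ω w = 1)
    (hw_orth : BirkhoffOrth (γ s₀) w) (hw_pos : 0 < ω (γ s₀) w) :
    γ' s₀ = ‖w‖⁻¹ • w :=
  stmt_16_general hdim ω hω γ γ' hderiv hunit hspeed horient s₀ w hw_orth hw_pos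
end
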